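/- Let d ≥ 4 and let 𝕊_{d,3} be the space of symmetric real d×d matrices with zero diagonal and all row sums zero. Then: (i) the only matrix in 𝕊_{d,3} fixed by P_σ (·) P_σᵀ for all σ ∈ S_{d−1}×S_1 (permutations fixing index d) is the zero matrix; (ii) a matrix S ∈ 𝕊_{d,3} is fixed by P_σ (·) P_σᵀ for all σ ∈ S_{d−2}×S_1×S_1 (permutations fixing indices d−1 and d) if and only if there exists α ∈ ℝ with S_{ij} = 2α/((d−2)(d−3)) for all distinct i, j ≤ d−2, S_{i,d−1} = S_{i,d} = −α/(d−2) for all i ≤ d−2, S_{d−1,d} = α, S symmetric with zero diagonal; in particular 𝕊_{d,3} ∩ M(d,d)^{S_{d−2}×S_1×S_1} is one-dimensional. -/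

import Mathlib

open Matrix

/-- The permutation matrix of `σ`. -/
def permMat {d : ℕ} (σ : Equiv.Perm (Fin d)) : Matrix (Fin d) (Fin d) ℝ :=
  Matrix.of fun i j => if σ j = i then (1 : ℝ) else 0

/-- The fixed-point space of a set `G` of permutations for the diagonal action
`W ↦ P_σ W P_σᵀ` on `d × d` matrices. -/
def fixedSpace {d : ℕ} (G : Set (Equiv.Perm (Fin d))) :
    Submodule ℝ (Matrix (Fin d) (Fin d) ℝ) where
  carrier := {W | ∀ σ ∈ G, permMat σ * W * (permMat σ)ᵀ = W}
  zero_mem' := by intro σ _; simp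
  add_mem' := by
    intro a b ha hb σ hσ
    rw [Matrix.mul_add, Matrix.add_mul, ha σ hσ, hb σ hσ]
  smul_mem' := by
    intro c a ha σ hσ
    rw [Matrix.mul_smul, Matrix.smul_mul, ha σ hσ]

/-- `𝕊_{d,3}`: symmetric matrices with zero diagonal and all row sums zero. -/
def Sd3 (d : ℕ) : Submodule ℝ (Matrix (Fin d) (Fin d) ℝ) where
  carrier := {A | Aᵀ = A ∧ (∀ i, A i i = 0) ∧ ∀ i, ∑ j, A i j = 0}
  zero_mem' := ⟨by simp, fun i => rfl, by simp⟩
  add_mem' := by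
    rintro a b ⟨ha1, ha2, ha3⟩ ⟨hb1, hb2, hb3⟩
    refine ⟨by rw [Matrix.transpose_add, ha1, hb1], fun i => ?_, fun i => ?_⟩
    · simp [Matrix.add_apply, ha2 i, hb2 i]
    · simp [Matrix.add_apply, Finset.sum_add_distrib, ha3 i, hb3 i]
  smul_mem' := by
    rintro c a ⟨ha1, ha2, ha3⟩
    refine ⟨by rw [Matrix.transpose_smul, ha1], fun i => ?_, fun i => ?_⟩
    · simp [Matrix.smul_apply, ha2 i]
    · simp [Matrix.smul_apply, ← Finset.mul_sum, ha3 i]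

/-!
The stabilizer of two indices `p ≠ q` has four orbits on off-diagonal positions: `{p, q}`
itself, the positions meeting `p`, those meeting `q`, and the rest. A symmetric zero-diagonal
matrix fixed by it is therefore a `pairPattern`, and zero row sums at `p`, at `q` and at one
further index are three linear equations determining every entry from the `(p, q)` entry.
For (i), pick any `p ≠ q`: a matrix fixed by the stabilizer of `q` is also fixed by a
transposition moving `p`, which identifies the `(p, q)` entry with `-1 / (d - 2)` times itself.
-/

section
variable {ι : Type*} [DecidableEq ι] {p q : ι} {a b c e : ℝ}

def pairPattern (p q : ι) (a b c e : ℝ) : Matrix ι ι ℝ :=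
  of fun i j =>
    if i = j then 0
    else if (i = p ∧ j = q) ∨ (i = q ∧ j = p) then e
    else if i = p ∨ j = p then b
    else if i = q ∨ j = q then c
    else a

theorem pairPattern_apply_self (i : ι) : pairPattern p q a b c e i i = 0 := by
  simp [pairPattern]

theorem pairPattern_transpose : (pairPattern p q a b c e)ᵀ = pairPattern p q a b c e := by
  ext i j
  simp only [pairPattern, transpose_apply, of_apply]
  split_ifs <;> grind

theorem pairPattern_swap (hpq : p ≠ q) : pairPattern q p a c b e = pairPattern p q a b c e := by
  ext i j
  simp only [pairPattern, of_apply]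
  split_ifs <;> grind

theorem smul_pairPattern (t : ℝ) :
    t • pairPattern p q a b c e = pairPattern p q (t * a) (t * b) (t * c) (t * e) := by
  ext i j
  simp only [pairPattern, Matrix.smul_apply, of_apply]
  split_ifs <;> simp

theorem pairPattern_submatrix {σ : Equiv.Perm ι} (hp : σ p = p) (hq : σ q = q) :
    (pairPattern p q a b c e).submatrix σ σ = pairPattern p q a b c e := by
  ext i j
  have hσp : ∀ k, σ k = p ↔ k = p := fun k => by rw [← hp, σ.apply_eq_iff_eq, hp]
  have hσq : ∀ k, σ k = q ↔ k = q := fun k => by rw [← hq, σ.apply_eq_iff_eq, hq]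
  simp only [pairPattern, submatrix_apply, of_apply, σ.apply_eq_iff_eq, hσp, hσq]

theorem eq_pairPattern_of_submatrix_eq {S : Matrix ι ι ℝ} (hS : S.IsSymm)
    (hdiag : ∀ i, S i i = 0)
    (hinv : ∀ σ : Equiv.Perm ι, σ p = p → σ q = q → S.submatrix σ σ = S)
    {i₀ j₀ : ι} (hij₀ : i₀ ≠ j₀) (hi₀p : i₀ ≠ p) (hi₀q : i₀ ≠ q) (hj₀p : j₀ ≠ p)
    (hj₀q : j₀ ≠ q) :
    S = pairPattern p q (S i₀ j₀) (S i₀ p) (S i₀ q) (S p q) := by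
  have hswap : ∀ {x y}, x ≠ p → x ≠ q → y ≠ p → y ≠ q →
      ∀ i j, S (Equiv.swap x y i) (Equiv.swap x y j) = S i j :=
    fun hxp hxq hyp hyq => congr_fun₂ (hinv _ (Equiv.swap_apply_of_ne_of_ne hxp.symm hyp.symm)
      (Equiv.swap_apply_of_ne_of_ne hxq.symm hyq.symm))
  have hcol : ∀ i, i ≠ p → i ≠ q → S i p = S i₀ p ∧ S i q = S i₀ q := by
    intro i hip hiq
    have hp := hswap hi₀p hi₀q hip hiq i₀ p
    have hq := hswap hi₀p hi₀q hip hiq i₀ q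
    rw [Equiv.swap_apply_left, Equiv.swap_apply_of_ne_of_ne hi₀p.symm hip.symm] at hp
    rw [Equiv.swap_apply_left, Equiv.swap_apply_of_ne_of_ne hi₀q.symm hiq.symm] at hq
    exact ⟨hp, hq⟩
  have hoff : ∀ i j, i ≠ j → i ≠ p → i ≠ q → j ≠ p → j ≠ q → S i j = S i₀ j₀ := by
    intro i j hij hip hiq hjp hjq
    set k := Equiv.swap i i₀ j
    have hk : k ≠ p ∧ k ≠ q ∧ k ≠ i₀ := by grind
    have h₁ := hswap hip hiq hi₀p hi₀q i j
    have h₂ := hswap hk.1 hk.2.1 hj₀p hj₀q i₀ k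
    rw [Equiv.swap_apply_left] at h₁
    rw [Equiv.swap_apply_of_ne_of_ne hk.2.2.symm hij₀, Equiv.swap_apply_left] at h₂
    rw [← h₁, h₂]
  have hsymm : ∀ i j, S j i = S i j := hS.apply
  ext i j
  simp only [pairPattern, of_apply]
  split_ifs <;> grind

end

section
variable {ι : Type*} [Fintype ι] [DecidableEq ι] {p q : ι} {a b c e : ℝ}

-- Normalized to `1` at `(p, q)`; the other constants are forced by zero row sums.
noncomputable def pairMatrix (p q : ι) : Matrix ι ι ℝ :=
  pairPattern p q (2 / ((Fintype.card ι - 2) * (Fintype.card ι - 3)))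
    (-1 / (Fintype.card ι - 2)) (-1 / (Fintype.card ι - 2)) 1

theorem exists_ne_ne_of_four_le_card (hcard : 4 ≤ Fintype.card ι) (p q : ι) :
    ∃ i j : ι, i ≠ j ∧ i ≠ p ∧ i ≠ q ∧ j ≠ p ∧ j ≠ q := by
  have h : 1 < (({p, q} : Finset ι)ᶜ).card := by
    have := Finset.card_le_two (a := p) (b := q)
    rw [Finset.card_compl]
    omega
  obtain ⟨i, hi, j, hj, hij⟩ := Finset.one_lt_card.1 h
  simp only [Finset.mem_compl, Finset.mem_insert, Finset.mem_singleton, not_or] at hi hj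
  exact ⟨i, j, hij, hi.1, hi.2, hj.1, hj.2⟩

theorem sum_pairPattern_left (hpq : p ≠ q) :
    ∑ j, pairPattern p q a b c e p j = e + (Fintype.card ι - 2) * b := by
  have row : ∀ j, pairPattern p q a b c e p j =
      b + (if j = p then -b else 0) + (if j = q then e - b else 0) := by
    intro j
    simp only [pairPattern, of_apply]
    split_ifs <;> grind
  simp only [row, Finset.sum_add_distrib, Finset.sum_ite_eq', Finset.mem_univ, if_true,
    Finset.sum_const, Finset.card_univ, nsmul_eq_mul]
  ring

theorem sum_pairPattern_right (hpq : p ≠ q) :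
    ∑ j, pairPattern p q a b c e q j = e + (Fintype.card ι - 2) * c := by
  rw [← pairPattern_swap hpq]
  exact sum_pairPattern_left hpq.symm

theorem sum_pairPattern_of_ne (hpq : p ≠ q) {i : ι} (hip : i ≠ p) (hiq : i ≠ q) :
    ∑ j, pairPattern p q a b c e i j = b + c + (Fintype.card ι - 3) * a := by
  have row : ∀ j, pairPattern p q a b c e i j = a + (if j = i then -a else 0) +
      (if j = p then b - a else 0) + (if j = q then c - a else 0) := by
    intro j
    simp only [pairPattern, of_apply]
    split_ifs <;> grind
  simp only [row, Finset.sum_add_distrib, Finset.sum_ite_eq', Finset.mem_univ, if_true,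
    Finset.sum_const, Finset.card_univ, nsmul_eq_mul]
  ring

theorem pairPattern_eq_smul_pairMatrix (hcard : 4 ≤ Fintype.card ι) (hpq : p ≠ q)
    (hrow : ∀ i, ∑ j, pairPattern p q a b c e i j = 0) :
    pairPattern p q a b c e = e • pairMatrix p q := by
  obtain ⟨i, -, -, hip, hiq, -, -⟩ := exists_ne_ne_of_four_le_card hcard p q
  have hn : (4 : ℝ) ≤ Fintype.card ι := by exact_mod_cast hcard
  have hn2 : (Fintype.card ι - 2 : ℝ) ≠ 0 := by linarith
  have hn3 : (Fintype.card ι - 3 : ℝ) ≠ 0 := by linarith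
  have hp := hrow p
  have hq := hrow q
  have hi := hrow i
  rw [sum_pairPattern_left hpq] at hp
  rw [sum_pairPattern_right hpq] at hq
  rw [sum_pairPattern_of_ne hpq hip hiq] at hi
  have hb : b = e * (-1 / (Fintype.card ι - 2)) := by
    field_simp
    linarith
  have hc : c = e * (-1 / (Fintype.card ι - 2)) := by
    field_simp
    linarith
  have ha : a = e * (2 / ((Fintype.card ι - 2) * (Fintype.card ι - 3))) := by
    field_simp
    linear_combination (Fintype.card ι - 2 : ℝ) * hi - hp - hq
  subst ha hb hc
  rw [pairMatrix, smul_pairPattern, mul_one]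

theorem eq_smul_pairMatrix_of_submatrix_eq (hcard : 4 ≤ Fintype.card ι) (hpq : p ≠ q)
    {S : Matrix ι ι ℝ} (hS : S.IsSymm) (hdiag : ∀ i, S i i = 0) (hrow : ∀ i, ∑ j, S i j = 0)
    (hinv : ∀ σ : Equiv.Perm ι, σ p = p → σ q = q → S.submatrix σ σ = S) :
    S = S p q • pairMatrix p q := by
  obtain ⟨i₀, j₀, hij₀, hi₀p, hi₀q, hj₀p, hj₀q⟩ := exists_ne_ne_of_four_le_card hcard p q
  have hpat := eq_pairPattern_of_submatrix_eq hS hdiag hinv hij₀ hi₀p hi₀q hj₀p hj₀q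
  rw [hpat] at hrow
  exact hpat.trans (pairPattern_eq_smul_pairMatrix hcard hpq hrow)

theorem pairMatrix_isSymm (p q : ι) : (pairMatrix p q).IsSymm :=
  pairPattern_transpose

theorem pairMatrix_apply_self (p q i : ι) : pairMatrix p q i i = 0 :=
  pairPattern_apply_self i

theorem pairMatrix_apply_left_right (hpq : p ≠ q) : pairMatrix p q p q = 1 := by
  simp [pairMatrix, pairPattern, hpq]

theorem pairMatrix_apply_right {i : ι} (hip : i ≠ p) (hiq : i ≠ q) :
    pairMatrix p q i q = -1 / (Fintype.card ι - 2) := by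
  simp [pairMatrix, pairPattern, hip, hiq]

theorem pairMatrix_submatrix {σ : Equiv.Perm ι} (hp : σ p = p) (hq : σ q = q) :
    (pairMatrix p q).submatrix σ σ = pairMatrix p q :=
  pairPattern_submatrix hp hq

theorem sum_pairMatrix_apply (hcard : 4 ≤ Fintype.card ι) (hpq : p ≠ q) (i : ι) :
    ∑ j, pairMatrix p q i j = 0 := by
  have hn : (4 : ℝ) ≤ Fintype.card ι := by exact_mod_cast hcard
  have hn2 : (Fintype.card ι - 2 : ℝ) ≠ 0 := by linarith
  have hn3 : (Fintype.card ι - 3 : ℝ) ≠ 0 := by linarith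
  rw [pairMatrix]
  by_cases hip : i = p
  · rw [hip, sum_pairPattern_left hpq]
    field_simp
    ring
  by_cases hiq : i = q
  · rw [hiq, sum_pairPattern_right hpq]
    field_simp
    ring
  rw [sum_pairPattern_of_ne hpq hip hiq]
  field_simp
  ring

theorem eq_zero_of_submatrix_eq (hcard : 4 ≤ Fintype.card ι) {S : Matrix ι ι ℝ}
    (hS : S.IsSymm) (hdiag : ∀ i, S i i = 0) (hrow : ∀ i, ∑ j, S i j = 0)
    (hinv : ∀ σ : Equiv.Perm ι, σ q = q → S.submatrix σ σ = S) :
    S = 0 := by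
  obtain ⟨p, i, hpi, hpq, -, hiq, -⟩ := exists_ne_ne_of_four_le_card hcard q q
  have hS' := eq_smul_pairMatrix_of_submatrix_eq hcard hpq hS hdiag hrow fun σ _ hq => hinv σ hq
  have hswap : S i q = S p q := by
    simpa [Equiv.swap_apply_of_ne_of_ne hpq.symm hiq.symm] using
      congr_fun₂ (hinv (Equiv.swap p i) (Equiv.swap_apply_of_ne_of_ne hpq.symm hiq.symm)) p q
  have hpq0 : S p q = 0 := by
    have hn : (4 : ℝ) ≤ Fintype.card ι := by exact_mod_cast hcard
    have hn2 : (Fintype.card ι - 2 : ℝ) ≠ 0 := by linarith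
    rw [hS'] at hswap
    simp only [Matrix.smul_apply, smul_eq_mul, pairMatrix_apply_right hpi.symm hiq,
      pairMatrix_apply_left_right hpq] at hswap
    field_simp at hswap
    have : S p q * (Fintype.card ι - 1) = 0 := by linear_combination -hswap
    exact (mul_eq_zero.1 this).resolve_right (by linarith)
  rw [hS', hpq0, zero_smul]

end

theorem permMat_eq_toMatrix {d : ℕ} (σ : Equiv.Perm (Fin d)) :
    permMat σ = σ.symm.toPEquiv.toMatrix := by
  ext i j
  simp [permMat, Equiv.symm_apply_eq, @eq_comm _ i]

theorem permMat_mul_mul_transpose {d : ℕ} (σ : Equiv.Perm (Fin d))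
    (S : Matrix (Fin d) (Fin d) ℝ) :
    permMat σ * S * (permMat σ)ᵀ = S.submatrix σ.symm σ.symm := by
  rw [permMat_eq_toMatrix, ← PEquiv.toMatrix_symm, ← Equiv.toPEquiv_symm, Equiv.symm_symm,
    PEquiv.toMatrix_toPEquiv_mul, PEquiv.mul_toMatrix_toPEquiv, submatrix_submatrix]
  rfl

theorem permMat_mul_mul_transpose_eq_iff {d : ℕ} (σ : Equiv.Perm (Fin d))
    (S : Matrix (Fin d) (Fin d) ℝ) :
    permMat σ * S * (permMat σ)ᵀ = S ↔ S.submatrix σ σ = S := by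
  rw [permMat_mul_mul_transpose]
  constructor <;> intro h <;> conv_lhs => rw [← h]
  all_goals simp [submatrix_submatrix]

theorem smul_pairMatrix_fin {d : ℕ} (p q : Fin d) (α : ℝ) :
    α • pairMatrix p q =
      Matrix.of fun i j : Fin d =>
        if i = j then (0 : ℝ)
        else if (i = p ∧ j = q) ∨ (i = q ∧ j = p) then α
        else if i = p ∨ i = q ∨ j = p ∨ j = q then -α / ((d : ℝ) - 2)
        else 2 * α / (((d : ℝ) - 2) * ((d : ℝ) - 3)) := by
  rw [pairMatrix, smul_pairPattern]
  ext i j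
  simp only [pairPattern, of_apply, Fintype.card_fin]
  split_ifs <;> first | tauto | ring

/-- for `d ≥ 4`: (i) the only matrix of `𝕊_{d,3}` fixed by all
permutations fixing the last index is zero; (ii) the matrices of `𝕊_{d,3}` fixed by
all permutations fixing the last two indices are exactly the explicit one-parameter
family described, so that `𝕊_{d,3} ∩ M(d,d)^{S_{d−2}×S_1×S_1}` is one-dimensional. -/
theorem Sd3_fixed_vectors (d : ℕ) (hd : 4 ≤ d) :
    (∀ S ∈ Sd3 d,
      (∀ σ : Equiv.Perm (Fin d), σ ⟨d - 1, by omega⟩ = ⟨d - 1, by omega⟩ →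
        permMat σ * S * (permMat σ)ᵀ = S) → S = 0) ∧
    (∀ S ∈ Sd3 d,
      ((∀ σ : Equiv.Perm (Fin d), σ ⟨d - 2, by omega⟩ = ⟨d - 2, by omega⟩ →
          σ ⟨d - 1, by omega⟩ = ⟨d - 1, by omega⟩ →
          permMat σ * S * (permMat σ)ᵀ = S) ↔
        ∃ α : ℝ, S = Matrix.of fun i j : Fin d =>
          if i = j then (0 : ℝ)
          else if (i = ⟨d - 2, by omega⟩ ∧ j = ⟨d - 1, by omega⟩) ∨
            (i = ⟨d - 1, by omega⟩ ∧ j = ⟨d - 2, by omega⟩) then α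
          else if i = ⟨d - 2, by omega⟩ ∨ i = ⟨d - 1, by omega⟩ ∨
            j = ⟨d - 2, by omega⟩ ∨ j = ⟨d - 1, by omega⟩ then -α / ((d : ℝ) - 2)
          else 2 * α / (((d : ℝ) - 2) * ((d : ℝ) - 3)))) ∧
    Module.finrank ℝ
      ↥(Sd3 d ⊓ fixedSpace {σ : Equiv.Perm (Fin d) |
          σ ⟨d - 2, by omega⟩ = ⟨d - 2, by omega⟩ ∧
          σ ⟨d - 1, by omega⟩ = ⟨d - 1, by omega⟩}) = 1 := by
  simp only [permMat_mul_mul_transpose_eq_iff, ← smul_pairMatrix_fin]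
  have hcard : 4 ≤ Fintype.card (Fin d) := by rwa [Fintype.card_fin]
  set p : Fin d := ⟨d - 2, by omega⟩
  set q : Fin d := ⟨d - 1, by omega⟩
  have hpq : p ≠ q := by simp only [p, q, ne_eq, Fin.mk.injEq]; omega
  have hspan : Sd3 d ⊓ fixedSpace {σ | σ p = p ∧ σ q = q} = ℝ ∙ pairMatrix p q := by
    apply le_antisymm
    · rintro S ⟨⟨hS, hdiag, hrow⟩, hinv⟩
      exact Submodule.mem_span_singleton.2 ⟨S p q, (eq_smul_pairMatrix_of_submatrix_eq hcard hpq
        hS hdiag hrow fun σ hp hq => (permMat_mul_mul_transpose_eq_iff σ S).1 (hinv σ ⟨hp, hq⟩)).symm⟩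
    · rw [Submodule.span_singleton_le_iff_mem]
      refine ⟨⟨pairMatrix_isSymm p q, pairMatrix_apply_self p q, sum_pairMatrix_apply hcard hpq⟩,
        fun σ hσ => (permMat_mul_mul_transpose_eq_iff σ _).2 (pairMatrix_submatrix hσ.1 hσ.2)⟩
  refine ⟨fun S ⟨hS, hdiag, hrow⟩ hinv => eq_zero_of_submatrix_eq hcard hS hdiag hrow hinv,
    fun S ⟨hS, hdiag, hrow⟩ => ⟨fun hinv => ⟨S p q, ?_⟩, ?_⟩, ?_⟩
  · exact eq_smul_pairMatrix_of_submatrix_eq hcard hpq hS hdiag hrow hinv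
  · rintro ⟨α, rfl⟩ σ hp hq
    exact congrArg (α • ·) (pairMatrix_submatrix hp hq)
  · rw [hspan, finrank_span_singleton]
    exact ne_of_apply_ne (· p q) (by simp [pairMatrix_apply_left_right hpq])
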